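/- In the setting of the parabolic Monge chart with k > 0 and a ≠ 0, the zero set of the Gaussian curvature K near the origin is a regular curve of the form x = −(d/a)y + O(y²); in particular the gradient of K at 0 is the nonzero vector k·(a, d), so the parabolic curve is a regular curve normal to (a,d) and transversal to the direction (1,0). -/

import Mathlib

/-- Partial derivative in the `x` direction. -/
noncomputable def pdx (f : ℝ × ℝ → ℝ) (q : ℝ × ℝ) : ℝ := fderiv ℝ f q (1, 0)

/-- Partial derivative in the `y` direction. -/
noncomputable def pdy (f : ℝ × ℝ → ℝ) (q : ℝ × ℝ) : ℝ := fderiv ℝ f q (0, 1)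

/-- Gaussian curvature of the graph `z = h(x,y)`. -/
noncomputable def gaussK (h : ℝ × ℝ → ℝ) (q : ℝ × ℝ) : ℝ :=
  (pdx (pdx h) q * pdy (pdy h) q - pdx (pdy h) q ^ 2)
    / (1 + pdx h q ^ 2 + pdy h q ^ 2) ^ 2

/-- Monge form at a parabolic point: cubic jet plus a remainder. -/
noncomputable def mongePar3 (k a b c d : ℝ) (Rm : ℝ × ℝ → ℝ) : ℝ × ℝ → ℝ :=
  fun q => k / 2 * q.2 ^ 2 + a / 6 * q.1 ^ 3 + d / 2 * q.1 ^ 2 * q.2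
    + b / 2 * q.1 * q.2 ^ 2 + c / 6 * q.2 ^ 3 + Rm q

/-!
At the origin `h_x = h_y = h_xx = h_xy = 0` and `h_yy = k`, so the numerator
`h_xx h_yy - h_xy²` of `K` vanishes while its denominator is `1`. Hence `dK = k · d(h_xx)` there,
which is `k (a dx + d dy)`: the remainder contributes nothing because its 3-jet vanishes. As
`∂K/∂x = k a ≠ 0`, the implicit function theorem solves `K = 0` for `x` as a `C¹` function of `y`
with slope `-(d/a)`, and a bump function extends it to a globally `C¹` function.
-/

open Filter Topology

section VanishingJet

variable {E F : Type*} [NormedAddCommGroup E] [NormedAddCommGroup F]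

def VanishesToOrder (𝕜 : Type*) [NontriviallyNormedField 𝕜] [NormedSpace 𝕜 E] [NormedSpace 𝕜 F]
    (n : ℕ) (f : E → F) (x : E) : Prop :=
  ContDiff 𝕜 n f ∧ ∀ i ≤ n, iteratedFDeriv 𝕜 i f x = 0

variable {𝕜 : Type*} [NontriviallyNormedField 𝕜] [NormedSpace 𝕜 E] [NormedSpace 𝕜 F]

theorem iteratedFDeriv_fderiv_apply {n : ℕ} {f : E → F} (hf : ContDiff 𝕜 (n + 1) f) (x v : E)
    (m : Fin n → E) :
    iteratedFDeriv 𝕜 n (fun y => fderiv 𝕜 f y v) x m =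
      iteratedFDeriv 𝕜 (n + 1) f x (Fin.snoc m v) := by
  have : (fun y => fderiv 𝕜 f y v) = ContinuousLinearMap.apply 𝕜 F v ∘ fderiv 𝕜 f := rfl
  rw [this, ContinuousLinearMap.iteratedFDeriv_comp_left _ (hf.fderiv_right le_rfl).contDiffAt
    le_rfl, iteratedFDeriv_succ_apply_right, Fin.init_snoc, Fin.snoc_last]
  rfl

namespace VanishesToOrder

variable {n : ℕ} {f : E → F} {x : E}

theorem apply_eq_zero (hf : VanishesToOrder 𝕜 n f x) : f x = 0 := by
  simpa using congrArg (· 0) (hf.2 0 (Nat.zero_le n))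

theorem differentiable (hf : VanishesToOrder 𝕜 (n + 1) f x) : Differentiable 𝕜 f :=
  hf.1.differentiable (by simp)

theorem fderiv_apply (hf : VanishesToOrder 𝕜 (n + 1) f x) (v : E) :
    VanishesToOrder 𝕜 n (fun y => fderiv 𝕜 f y v) x := by
  refine ⟨(hf.1.fderiv_right (m := n) (by push_cast; rfl)).clm_apply contDiff_const,
    fun i hi => ?_⟩
  ext m
  have hi' : ((i + 1 : ℕ) : WithTop ℕ∞) ≤ (n + 1 : ℕ) := by exact_mod_cast Nat.succ_le_succ hi
  rw [iteratedFDeriv_fderiv_apply (hf.1.of_le hi'), hf.2 (i + 1) (by omega)]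
  rfl

end VanishesToOrder

end VanishingJet

theorem ContDiffAt.exists_contDiff_eventuallyEq {E F : Type*} [NormedAddCommGroup E]
    [NormedSpace ℝ E] [HasContDiffBump E] [NormedAddCommGroup F] [NormedSpace ℝ F] {n : ℕ}
    {ψ : E → F} {x : E} (hψ : ContDiffAt ℝ n ψ x) :
    ∃ φ : E → F, ContDiff ℝ n φ ∧ φ =ᶠ[𝓝 x] ψ := by
  obtain ⟨u, hu, hψu⟩ := hψ.contDiffOn le_rfl (by simp)
  obtain ⟨r, hr, hball⟩ := Metric.mem_nhds_iff.1 (interior_mem_nhds.2 hu)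
  let χ : ContDiffBump x := ⟨r / 4, r / 2, by positivity, by linarith⟩
  refine ⟨fun y => χ y • ψ y, contDiff_iff_contDiffAt.2 fun y => ?_, ?_⟩
  · by_cases hy : y ∈ tsupport χ
    · rw [χ.tsupport_eq] at hy
      have hyu : u ∈ 𝓝 y := mem_interior_iff_mem_nhds.1 <|
        hball (Metric.closedBall_subset_ball (half_lt_self hr) hy)
      exact χ.contDiff.contDiffAt.smul (hψu.contDiffAt hyu)
    · refine (contDiffAt_const (c := (0 : F))).congr_of_eventuallyEq ?_
      filter_upwards [notMem_tsupport_iff_eventuallyEq.1 hy] with z hz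
      simp [hz]
  · filter_upwards [χ.eventuallyEq_one] with y hy
    simp [hy]

theorem Filter.Eventually.exists_sq_add_sq_lt {p : ℝ × ℝ → Prop} (h : ∀ᶠ v in 𝓝 0, p v) :
    ∃ ε > 0, ∀ x y : ℝ, x ^ 2 + y ^ 2 < ε → p (x, y) := by
  obtain ⟨δ, hδ, hball⟩ := Metric.eventually_nhds_iff.1 h
  refine ⟨δ ^ 2, by positivity, fun x y hxy => hball ?_⟩
  have hx : |x| < δ := abs_lt_of_sq_lt_sq (by nlinarith [sq_nonneg y]) hδ.le
  have hy : |y| < δ := abs_lt_of_sq_lt_sq (by nlinarith [sq_nonneg x]) hδ.le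
  simpa [Prod.dist_eq] using ⟨hx, hy⟩

theorem contDiff_pdx {n : WithTop ℕ∞} {f : ℝ × ℝ → ℝ} (hf : ContDiff ℝ (n + 1) f) :
    ContDiff ℝ n (pdx f) :=
  (hf.fderiv_right le_rfl).clm_apply contDiff_const

theorem contDiff_pdy {n : WithTop ℕ∞} {f : ℝ × ℝ → ℝ} (hf : ContDiff ℝ (n + 1) f) :
    ContDiff ℝ n (pdy f) :=
  (hf.fderiv_right le_rfl).clm_apply contDiff_const

theorem pdx_add {f g : ℝ × ℝ → ℝ} (hf : Differentiable ℝ f) (hg : Differentiable ℝ g) :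
    pdx (f + g) = pdx f + pdx g := by
  ext q
  simp [pdx, fderiv_add (hf q) (hg q)]

theorem pdy_add {f g : ℝ × ℝ → ℝ} (hf : Differentiable ℝ f) (hg : Differentiable ℝ g) :
    pdy (f + g) = pdy f + pdy g := by
  ext q
  simp [pdy, fderiv_add (hf q) (hg q)]

theorem VanishesToOrder.pdx {n : ℕ} {f : ℝ × ℝ → ℝ} {x : ℝ × ℝ}
    (hf : VanishesToOrder ℝ (n + 1) f x) : VanishesToOrder ℝ n (pdx f) x :=
  hf.fderiv_apply _

theorem VanishesToOrder.pdy {n : ℕ} {f : ℝ × ℝ → ℝ} {x : ℝ × ℝ}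
    (hf : VanishesToOrder ℝ (n + 1) f x) : VanishesToOrder ℝ n (pdy f) x :=
  hf.fderiv_apply _

theorem exists_implicitFunction_fst {K : ℝ × ℝ → ℝ} {u : ℝ × ℝ} (hK : ContDiffAt ℝ 1 K u)
    (hx : pdx K u ≠ 0) :
    ∃ ψ : ℝ → ℝ, ContDiffAt ℝ 1 ψ u.2 ∧ HasDerivAt ψ (-(pdy K u / pdx K u)) u.2 ∧
      ∀ᶠ v in 𝓝 u, (K v = K u ↔ v.1 = ψ v.2) := by
  -- `ContDiffAt.implicitFunction` solves for the second coordinate, so swap the factors.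
  set σ := ContinuousLinearEquiv.prodComm ℝ ℝ ℝ
  set f : ℝ × ℝ → ℝ := K ∘ σ
  have hf : ContDiffAt ℝ 1 f u.swap := hK.comp _ σ.contDiff.contDiffAt
  have hfd : fderiv ℝ f u.swap = fderiv ℝ K u ∘L (σ : ℝ × ℝ →L[ℝ] ℝ × ℝ) :=
    ((hK.differentiableAt_one).hasFDerivAt.comp u.swap σ.hasFDerivAt).fderiv
  set A := fderiv ℝ f u.swap ∘L .inr ℝ ℝ ℝ
  have hA : A ∘L ((pdx K u)⁻¹ • .id ℝ ℝ) = .id ℝ ℝ ∧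
      ((pdx K u)⁻¹ • .id ℝ ℝ) ∘L A = .id ℝ ℝ := by
    have hAt : ∀ t, A t = t * pdx K u := fun t => by
      rw [pdx, ← smul_eq_mul, ← map_smul]
      simp [A, hfd, σ]
    constructor <;> ext <;> simp [hAt, hx]
  have hAinv : A.IsInvertible := .of_inverse hA.1 hA.2
  refine ⟨hf.implicitFunction one_ne_zero hAinv, hf.contDiffAt_implicitFunction one_ne_zero hAinv,
    ?_, ?_⟩
  · refine (hf.hasStrictFDerivAt_implicitFunction one_ne_zero hAinv).hasFDerivAt.hasDerivAt
      |>.congr_deriv ?_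
    rw [ContinuousLinearMap.inverse_eq hA.1 hA.2]
    simp [hfd, σ, pdy, inv_mul_eq_div]
  · filter_upwards [(continuous_swap.tendsto u).eventually
      (hf.eventually_apply_eq_iff_implicitFunction one_ne_zero hAinv)] with v hv
    simpa [f, σ, eq_comm] using hv

theorem exists_contDiff_graph_eq_zero_set {K : ℝ × ℝ → ℝ} (hK : ContDiffAt ℝ 1 K 0)
    (h0 : K 0 = 0) (hx : pdx K 0 ≠ 0) :
    ∃ ε > 0, ∃ φ : ℝ → ℝ, ContDiff ℝ 1 φ ∧ φ 0 = 0 ∧ deriv φ 0 = -(pdy K 0 / pdx K 0) ∧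
      ∀ x y : ℝ, x ^ 2 + y ^ 2 < ε → (K (x, y) = 0 ↔ x = φ y) := by
  obtain ⟨ψ, hψC, hψd, hψK⟩ := exists_implicitFunction_fst hK hx
  rw [Prod.snd_zero] at hψC hψd
  obtain ⟨φ, hφC, hφψ⟩ := hψC.exists_contDiff_eventuallyEq
  have hφψ' : ∀ᶠ v : ℝ × ℝ in 𝓝 0, φ v.2 = ψ v.2 := (continuous_snd.tendsto' 0 0 rfl).eventually hφψ
  obtain ⟨ε, hε, hgraph⟩ := (hψK.and hφψ').exists_sq_add_sq_lt
  simp only [h0] at hgraph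
  refine ⟨ε, hε, φ, hφC, ?_, ?_, fun x y hxy => ?_⟩
  · obtain ⟨hK00, hφ0⟩ := hgraph 0 0 (by simpa using hε)
    rw [hφ0, ← hK00.1 (by rwa [Prod.mk_zero_zero])]
  · rw [hφψ.deriv_eq, hψd.deriv]
  · obtain ⟨hKxy, hφ⟩ := hgraph x y hxy
    rwa [hφ]

theorem contDiff_gaussK {n : WithTop ℕ∞} {h : ℝ × ℝ → ℝ} (hh : ContDiff ℝ (n + 2) h) :
    ContDiff ℝ n (gaussK h) := by
  have h1 : ContDiff ℝ (n + 1) (pdx h) := contDiff_pdx (by rwa [add_assoc, one_add_one_eq_two])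
  have h2 : ContDiff ℝ (n + 1) (pdy h) := contDiff_pdy (by rwa [add_assoc, one_add_one_eq_two])
  have h11 := contDiff_pdx h1
  have h12 := contDiff_pdx h2
  have h22 := contDiff_pdy h2
  have h1' := h1.of_le le_self_add
  have h2' := h2.of_le le_self_add
  exact ContDiff.div (by fun_prop) (by fun_prop) fun q => by positivity

theorem hasFDerivAt_gaussK {h : ℝ × ℝ → ℝ} {q : ℝ × ℝ} {k : ℝ} (hh : ContDiff ℝ 3 h)
    (h1 : pdx h q = 0) (h2 : pdy h q = 0) (h11 : pdx (pdx h) q = 0) (h12 : pdx (pdy h) q = 0)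
    (h22 : pdy (pdy h) q = k) :
    HasFDerivAt (gaussK h) (k • fderiv ℝ (pdx (pdx h)) q) q := by
  have hx : ContDiff ℝ 2 (pdx h) := contDiff_pdx hh
  have hy : ContDiff ℝ 2 (pdy h) := contDiff_pdy hh
  have hd11 := (contDiff_pdx (n := 1) hx).differentiable one_ne_zero
  have hd12 := (contDiff_pdx (n := 1) hy).differentiable one_ne_zero
  have hd22 := (contDiff_pdy (n := 1) hy).differentiable one_ne_zero
  set N := fun p => pdx (pdx h) p * pdy (pdy h) p - pdx (pdy h) p ^ 2
  set D := fun p => ((1 + pdx h p ^ 2 + pdy h p ^ 2) ^ 2)⁻¹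
  have hK : gaussK h = fun p => N p * D p := by
    ext p; simp [gaussK, N, D, div_eq_mul_inv]
  have hN : HasFDerivAt N (k • fderiv ℝ (pdx (pdx h)) q) q := by
    refine (((hd11 q).hasFDerivAt.mul (hd22 q).hasFDerivAt).sub
      ((hd12 q).hasFDerivAt.pow 2)).congr_fderiv ?_
    simp [h11, h12, h22]
  have hD : DifferentiableAt ℝ D q := by
    have := (hx.differentiable two_ne_zero) q
    have := (hy.differentiable two_ne_zero) q
    exact DifferentiableAt.inv (by fun_prop) (by positivity)
  rw [hK]
  -- `N q = 0` and `D q = 1`, so the derivative of `D` drops out.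
  refine (hN.mul hD.hasFDerivAt).congr_fderiv ?_
  simp [N, D, h11, h12, h1, h2]

section Monge

variable (k a b c d : ℝ)

theorem mongePar3_eq_add (Rm : ℝ × ℝ → ℝ) :
    mongePar3 k a b c d Rm = mongePar3 k a b c d 0 + Rm := by
  ext q; simp [mongePar3]

theorem contDiff_mongePar3 {n : WithTop ℕ∞} {Rm : ℝ × ℝ → ℝ} (hR : ContDiff ℝ n Rm) :
    ContDiff ℝ n (mongePar3 k a b c d Rm) := by
  unfold mongePar3; fun_prop

theorem pdx_mongePar3_zero :
    pdx (mongePar3 k a b c d 0) = fun q => a / 2 * q.1 ^ 2 + d * q.1 * q.2 + b / 2 * q.2 ^ 2 := by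
  ext q
  unfold pdx mongePar3
  simp (disch := fun_prop) only [Pi.zero_apply, add_zero, fderiv_fun_add, fderiv_fun_mul,
    fderiv_fun_pow, fderiv_fun_const, fderiv_fst, fderiv_snd, add_apply, smul_apply, zero_apply,
    ContinuousLinearMap.coe_fst', ContinuousLinearMap.coe_snd', smul_eq_mul, nsmul_eq_mul]
  ring

theorem pdy_mongePar3_zero :
    pdy (mongePar3 k a b c d 0) =
      fun q => k * q.2 + d / 2 * q.1 ^ 2 + b * q.1 * q.2 + c / 2 * q.2 ^ 2 := by
  ext q
  unfold pdy mongePar3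
  simp (disch := fun_prop) only [Pi.zero_apply, add_zero, fderiv_fun_add, fderiv_fun_mul,
    fderiv_fun_pow, fderiv_fun_const, fderiv_fst, fderiv_snd, add_apply, smul_apply, zero_apply,
    ContinuousLinearMap.coe_fst', ContinuousLinearMap.coe_snd', smul_eq_mul, nsmul_eq_mul]
  ring

theorem pdx_pdx_mongePar3_zero :
    pdx (pdx (mongePar3 k a b c d 0)) = fun q => a * q.1 + d * q.2 := by
  ext q
  rw [pdx_mongePar3_zero]
  unfold pdx
  simp (disch := fun_prop) only [fderiv_fun_add, fderiv_fun_mul, fderiv_fun_pow, fderiv_fun_const,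
    fderiv_fst, fderiv_snd, add_apply, smul_apply, zero_apply, Pi.zero_apply,
    ContinuousLinearMap.coe_fst', ContinuousLinearMap.coe_snd', smul_eq_mul, nsmul_eq_mul]
  ring

theorem pdx_pdy_mongePar3_zero :
    pdx (pdy (mongePar3 k a b c d 0)) = fun q => d * q.1 + b * q.2 := by
  ext q
  rw [pdy_mongePar3_zero]
  unfold pdx
  simp (disch := fun_prop) only [fderiv_fun_add, fderiv_fun_mul, fderiv_fun_pow, fderiv_fun_const,
    fderiv_fst, fderiv_snd, add_apply, smul_apply, zero_apply, Pi.zero_apply,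
    ContinuousLinearMap.coe_fst', ContinuousLinearMap.coe_snd', smul_eq_mul, nsmul_eq_mul]
  ring

theorem pdy_pdy_mongePar3_zero :
    pdy (pdy (mongePar3 k a b c d 0)) = fun q => k + b * q.1 + c * q.2 := by
  ext q
  rw [pdy_mongePar3_zero]
  unfold pdy
  simp (disch := fun_prop) only [fderiv_fun_add, fderiv_fun_mul, fderiv_fun_pow, fderiv_fun_const,
    fderiv_fst, fderiv_snd, add_apply, smul_apply, zero_apply, Pi.zero_apply,
    ContinuousLinearMap.coe_fst', ContinuousLinearMap.coe_snd', smul_eq_mul, nsmul_eq_mul]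
  ring

theorem pdx_pdx_pdx_mongePar3_zero : pdx (pdx (pdx (mongePar3 k a b c d 0))) 0 = a := by
  rw [pdx_pdx_mongePar3_zero]
  unfold pdx
  simp (disch := fun_prop) only [fderiv_fun_add, fderiv_const_mul, fderiv_fst, fderiv_snd,
    add_apply, smul_apply, ContinuousLinearMap.coe_fst', ContinuousLinearMap.coe_snd', smul_eq_mul]
  ring

theorem pdy_pdx_pdx_mongePar3_zero : pdy (pdx (pdx (mongePar3 k a b c d 0))) 0 = d := by
  rw [pdx_pdx_mongePar3_zero]
  unfold pdy
  simp (disch := fun_prop) only [fderiv_fun_add, fderiv_const_mul, fderiv_fst, fderiv_snd,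
    add_apply, smul_apply, ContinuousLinearMap.coe_fst', ContinuousLinearMap.coe_snd', smul_eq_mul]
  ring

theorem mongePar3_partials_at_zero {Rm : ℝ × ℝ → ℝ} (hR : VanishesToOrder ℝ 3 Rm 0) :
    pdx (mongePar3 k a b c d Rm) 0 = 0 ∧ pdy (mongePar3 k a b c d Rm) 0 = 0 ∧
      pdx (pdx (mongePar3 k a b c d Rm)) 0 = 0 ∧ pdx (pdy (mongePar3 k a b c d Rm)) 0 = 0 ∧
      pdy (pdy (mongePar3 k a b c d Rm)) 0 = k ∧ pdx (pdx (pdx (mongePar3 k a b c d Rm))) 0 = a ∧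
      pdy (pdx (pdx (mongePar3 k a b c d Rm))) 0 = d := by
  have hP : ContDiff ℝ 3 (mongePar3 k a b c d 0) := contDiff_mongePar3 k a b c d contDiff_const
  have hPx := (contDiff_pdx (n := 2) hP).differentiable two_ne_zero
  have hPy := (contDiff_pdy (n := 2) hP).differentiable two_ne_zero
  have hPxx := (contDiff_pdx (n := 1) (contDiff_pdx (n := 2) hP)).differentiable one_ne_zero
  have ex : pdx (mongePar3 k a b c d Rm) = pdx (mongePar3 k a b c d 0) + pdx Rm := by
    rw [mongePar3_eq_add, pdx_add (hP.differentiable (by simp)) hR.differentiable]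
  have ey : pdy (mongePar3 k a b c d Rm) = pdy (mongePar3 k a b c d 0) + pdy Rm := by
    rw [mongePar3_eq_add, pdy_add (hP.differentiable (by simp)) hR.differentiable]
  have exx : pdx (pdx (mongePar3 k a b c d Rm)) =
      pdx (pdx (mongePar3 k a b c d 0)) + pdx (pdx Rm) := by
    rw [ex, pdx_add hPx hR.pdx.differentiable]
  refine ⟨?_, ?_, ?_, ?_, ?_, ?_, ?_⟩
  · simp [ex, pdx_mongePar3_zero, hR.pdx.apply_eq_zero]
  · simp [ey, pdy_mongePar3_zero, hR.pdy.apply_eq_zero]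
  · simp [exx, pdx_pdx_mongePar3_zero, hR.pdx.pdx.apply_eq_zero]
  · simp [ey, pdx_add hPy hR.pdy.differentiable, pdx_pdy_mongePar3_zero,
      hR.pdy.pdx.apply_eq_zero]
  · simp [ey, pdy_add hPy hR.pdy.differentiable, pdy_pdy_mongePar3_zero,
      hR.pdy.pdy.apply_eq_zero]
  · simp [exx, pdx_add hPxx hR.pdx.pdx.differentiable, pdx_pdx_pdx_mongePar3_zero,
      hR.pdx.pdx.pdx.apply_eq_zero]
  · simp [exx, pdy_add hPxx hR.pdx.pdx.differentiable, pdy_pdx_pdx_mongePar3_zero,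
      hR.pdx.pdx.pdy.apply_eq_zero]

end Monge

/-- In the parabolic Monge chart with `k > 0`, `a ≠ 0`, the gradient of `K`
at the origin is the nonzero vector `k(a,d)`, and the zero set of `K` is
locally a regular curve `x = -(d/a) y + O(y²)`, transversal to `(1,0)`. -/
theorem statement13 (k a b c d : ℝ) (hk : 0 < k) (ha : a ≠ 0)
    (Rm : ℝ × ℝ → ℝ) (hR : ContDiff ℝ 4 Rm)
    (hjet : ∀ i : ℕ, i ≤ 3 → iteratedFDeriv ℝ i Rm 0 = 0) :
    pdx (gaussK (mongePar3 k a b c d Rm)) (0, 0) = k * a ∧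
    pdy (gaussK (mongePar3 k a b c d Rm)) (0, 0) = k * d ∧
    (k * a, k * d) ≠ ((0 : ℝ), (0 : ℝ)) ∧
    ∃ ε > 0, ∃ φ : ℝ → ℝ, ContDiff ℝ 1 φ ∧ φ 0 = 0 ∧ deriv φ 0 = -(d / a) ∧
      ∀ x y : ℝ, x ^ 2 + y ^ 2 < ε →
        (gaussK (mongePar3 k a b c d Rm) (x, y) = 0 ↔ x = φ y) := by
  obtain ⟨h1, h2, h11, h12, h22, h111, h112⟩ :=
    mongePar3_partials_at_zero k a b c d (Rm := Rm) ⟨hR.of_le (by norm_num), hjet⟩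
  set h := mongePar3 k a b c d Rm
  have hh : ContDiff ℝ 3 h := contDiff_mongePar3 k a b c d (hR.of_le (by norm_num))
  have hK := hasFDerivAt_gaussK hh h1 h2 h11 h12 h22
  have hKx : pdx (gaussK h) 0 = k * a := by
    rw [← h111]; exact congrArg (· (1, 0)) hK.fderiv
  have hKy : pdy (gaussK h) 0 = k * d := by
    rw [← h112]; exact congrArg (· (0, 1)) hK.fderiv
  have hka : k * a ≠ 0 := mul_ne_zero hk.ne' ha
  simp only [Prod.mk_zero_zero]
  refine ⟨hKx, hKy, by simp [hka], ?_⟩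
  obtain ⟨ε, hε, φ, hφC, hφ0, hφd, hgraph⟩ := exists_contDiff_graph_eq_zero_set
    ((contDiff_gaussK (n := 1) hh).contDiffAt) (by simp [gaussK, h11, h12]) (hKx ▸ hka)
  refine ⟨ε, hε, φ, hφC, hφ0, ?_, hgraph⟩
  rw [hφd, hKx, hKy, mul_div_mul_left _ _ hk.ne']
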